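/- arXiv:2604.13825 — 2 statements merged into one kernel-verified Lean document; each statement's English description precedes it below -/
import Mathlib

section
/- Let f : 𝔻 → 𝔻 be analytic, not identically 0, and let σ be a finite positive Borel measure on ∂𝔻 such that log|f(z)|^{-2} = Σ_{w∈𝔻, f(w)=0} m_w · log|(z−w)/(1−w̄z)|^{-2} + 2∫_{∂𝔻}(1−|z|²)/|ξ−z|² dσ(ξ) for every z ∈ 𝔻 with f(z) ≠ 0 (m_w the order of the zero of f at w). Set μ = Σ_{w : f(w)=0} m_w(1−|w|²)δ_w + 2σ on 𝔻̄ and P[μ](z) = ∫_{𝔻̄} (1−|z|²)/|1−w̄z|² dμ(w). Then for every δ > 0 there exists a constant C = C(δ) > 0 such that log|f(z)|^{-2} ≤ C·P[μ](z) whenever z ∈ 𝔻 satisfies d_h(z, {w ∈ 𝔻 : f(w) = 0}) ≥ δ; moreover C(δ) → 1 as δ → ∞. -/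
open MeasureTheory Complex Set Metric Filter
open scoped ENNReal NNReal Topology

noncomputable section

/-- The hyperbolic derivative of an analytic self-map of the unit disc. -/
def hypDeriv (f : ℂ → ℂ) (z : ℂ) : ℝ :=
  (1 - ‖z‖ ^ 2) * ‖deriv f z‖ / (1 - ‖f z‖ ^ 2)

/-- A self-map of the disc is contractive if its hyperbolic derivative is
uniformly bounded by a constant smaller than one. -/
def ContractiveMap (f : ℂ → ℂ) : Prop :=
  ∃ D < (1 : ℝ), ∀ z ∈ ball (0 : ℂ) 1, hypDeriv f z ≤ D

/-- The closed arc of the unit circle with center `ξ` and normalized length `t`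
(arclength `2 π t`). -/
def bdryArc (ξ : ℂ) (t : ℝ) : Set ℂ :=
  {η : ℂ | ∃ θ : ℝ, |θ| ≤ Real.pi * t ∧ η = Complex.exp (θ * Complex.I) * ξ}

/-- The Carleson box over the arc with center `ξ` and normalized length `t`. -/
def carlesonBox (ξ : ℂ) (t : ℝ) : Set ℂ :=
  {z : ℂ | z ∈ ball (0 : ℂ) 1 ∧ 1 - ‖z‖ ≤ t ∧ z ≠ 0 ∧ (‖z‖ : ℂ)⁻¹ * z ∈ bdryArc ξ t}

/-- Normalized arclength measure on the unit circle (total mass 1). -/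
def circleM : Measure ℂ :=
  Measure.map (fun θ : ℝ => Complex.exp (2 * Real.pi * θ * Complex.I))
    (volume.restrict (Ioc (0 : ℝ) 1))

/-- Normalized area measure on the unit disc (total mass 1). -/
def discM : Measure ℂ :=
  (ENNReal.ofReal Real.pi)⁻¹ • volume.restrict (ball (0 : ℂ) 1)

/-- Poisson integral of a measure on the unit circle. -/
def poissonInt (σ : Measure ℂ) (z : ℂ) : ℝ :=
  ∫ ξ, (1 - ‖z‖ ^ 2) / ‖ξ - z‖ ^ 2 ∂σ

/-- Hyperbolic distance on the unit disc. -/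
def hypDist (z w : ℂ) : ℝ :=
  (1 / 2) * Real.log ((1 + ‖(z - w) / (1 - (starRingEnd ℂ) w * z)‖) /
    (1 - ‖(z - w) / (1 - (starRingEnd ℂ) w * z)‖))

/-- `u` is harmonic on the unit disc: twice continuously differentiable with
vanishing Laplacian. -/
def HarmonicOnDisc (u : ℂ → ℝ) : Prop :=
  ContDiffOn ℝ 2 u (ball (0 : ℂ) 1) ∧
    ∀ z ∈ ball (0 : ℂ) 1,
      fderiv ℝ (fun w => fderiv ℝ u w 1) z 1 +
        fderiv ℝ (fun w => fderiv ℝ u w Complex.I) z Complex.I = 0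

/-- An inner function: a bounded analytic self-map of the disc whose radial limits
have modulus one almost everywhere on the circle. -/
def InnerFunction (f : ℂ → ℂ) : Prop :=
  DifferentiableOn ℂ f (ball (0 : ℂ) 1) ∧
    (∀ z ∈ ball (0 : ℂ) 1, f z ∈ ball (0 : ℂ) 1) ∧
    ∀ᵐ ξ ∂circleM, ∃ L : ℂ, ‖L‖ = 1 ∧
      Tendsto (fun r : ℝ => f ((r : ℂ) * ξ)) (nhdsWithin 1 (Iio 1)) (nhds L)

/-- The set of boundary points whose radial limit under `f` exists and lies in `E`. -/
def radialPreimage (f : ℂ → ℂ) (E : Set ℂ) : Set ℂ :=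
  {ξ : ℂ | ‖ξ‖ = 1 ∧ ∃ L ∈ E,
    Tendsto (fun r : ℝ => f ((r : ℂ) * ξ)) (nhdsWithin 1 (Iio 1)) (nhds L)}

/-- Harmonic measure of `E ⊆ ∂𝔻` from the point `z ∈ 𝔻`. -/
def harmonicMeas (z : ℂ) (E : Set ℂ) : ℝ :=
  ∫ ξ in E, (1 - ‖z‖ ^ 2) / ‖ξ - z‖ ^ 2 ∂circleM

/-- Poisson integral of a positive measure on the closed unit disc. -/
def poissonMu (μ : Measure ℂ) (z : ℂ) : ℝ≥0∞ :=
  ∫⁻ w, ENNReal.ofReal ((1 - ‖z‖ ^ 2) / ‖1 - (starRingEnd ℂ) w * z‖ ^ 2) ∂μ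

/-- The measure `Σ_{f(w)=0} m_w (1-|w|²) δ_w` over the zeros of `f` in the disc,
with multiplicities given by `ord`. -/
def zeroMassMeasure (f : ℂ → ℂ) (ord : ℂ → ℕ) : Measure ℂ :=
  Measure.sum (fun w : {w : ℂ // w ∈ ball (0 : ℂ) 1 ∧ f w = 0} =>
    ((ord (w : ℂ) : ℝ≥0∞) * ENNReal.ofReal (1 - ‖(w : ℂ)‖ ^ 2)) • Measure.dirac (w : ℂ))

/-- The dyadic subarc of generation `p.1` and index `p.2` of the (half-open) arc
with center `ξ` and normalized length `t`, obtained by repeated bisection. -/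
def dyadicArc (ξ : ℂ) (t : ℝ) (p : ℕ × ℕ) : Set ℂ :=
  {η : ℂ | ∃ θ : ℝ,
    -(Real.pi * t) + 2 * Real.pi * t * p.2 / 2 ^ p.1 ≤ θ ∧
    θ < -(Real.pi * t) + 2 * Real.pi * t * (p.2 + 1) / 2 ^ p.1 ∧
    η = Complex.exp (θ * Complex.I) * ξ}

/-!
Write `ρ = ρ(z, w)` and `P_z(w) = (1 - |z|²) / |1 - w̄ z|²`. The identity
`1 - ρ² = (1 - |w|²) P_z(w)` together with `log (1/ρ²) ≤ 1/ρ² - 1 = (1 - ρ²)/ρ²` bounds each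
Blaschke term `log ρ(z, w)⁻²` of `log |f z|⁻²` by `ρ⁻² (1 - |w|²) P_z(w)`, the mass that `w`
contributes to `P[μ](z)`. Since `d_h = artanh ρ`, a point `δ`-far from the zeros has `ρ ≥ tanh δ`
for every zero, and on the circle `|1 - ξ̄ z| = |ξ - z|`, so the singular part of `log |f z|⁻²` is
exactly the `σ`-part of `P[μ](z)`. Hence `C(δ) = (tanh δ)⁻² → 1` works.
-/

lemma Real.tanh_pos {x : ℝ} (hx : 0 < x) : 0 < Real.tanh x := by
  rw [Real.tanh_eq_sinh_div_cosh]
  exact div_pos (Real.sinh_pos_iff.mpr hx) (Real.cosh_pos x)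

lemma Real.tanh_eq_one_sub_div_one_add (x : ℝ) :
    Real.tanh x = (1 - Real.exp (-2 * x)) / (1 + Real.exp (-2 * x)) := by
  have h : Real.exp x * Real.exp (-x) = 1 := by rw [← Real.exp_add]; simp
  rw [Real.tanh_eq, show -2 * x = -x + -x by ring, Real.exp_add,
    div_eq_div_iff (by positivity) (by positivity)]
  linear_combination (2 * Real.exp (-x)) * h

lemma Real.tendsto_tanh_atTop : Tendsto Real.tanh atTop (𝓝 1) := by
  have hu : Tendsto (fun x : ℝ => Real.exp (-2 * x)) atTop (𝓝 0) :=
    Real.tendsto_exp_atBot.comp (tendsto_id.const_mul_atTop_of_neg (by norm_num))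
  have h := (tendsto_const_nhds (x := (1 : ℝ)).sub hu).div
    (tendsto_const_nhds (x := (1 : ℝ)).add hu) (by norm_num)
  rw [sub_zero, add_zero, div_one] at h
  convert h using 1
  ext x
  exact Real.tanh_eq_one_sub_div_one_add x

lemma Real.neg_two_mul_log_le_inv_sq_mul_one_sub_sq {t ρ : ℝ} (ht : 0 < t) (htρ : t ≤ ρ) (hρ : ρ ≤ 1) :
    -2 * Real.log ρ ≤ (t ^ 2)⁻¹ * (1 - ρ ^ 2) := by
  have hρ0 : 0 < ρ := ht.trans_le htρ
  calc -2 * Real.log ρ = Real.log (ρ ^ 2)⁻¹ := by rw [Real.log_inv, Real.log_pow]; push_cast; ring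
    _ ≤ (ρ ^ 2)⁻¹ - 1 := Real.log_le_sub_one_of_pos (by positivity)
    _ = (ρ ^ 2)⁻¹ * (1 - ρ ^ 2) := by field_simp
    _ ≤ (t ^ 2)⁻¹ * (1 - ρ ^ 2) := by
        gcongr
        nlinarith

lemma tendsto_inv_tanh_sq_atTop : Tendsto (fun δ => (Real.tanh δ ^ 2)⁻¹) atTop (𝓝 1) := by
  simpa using (Real.tendsto_tanh_atTop.pow 2).inv₀ (by norm_num)

def pseudoHypDist (z w : ℂ) : ℝ :=
  ‖(z - w) / (1 - (starRingEnd ℂ) w * z)‖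

def discPoissonKernel (z w : ℂ) : ℝ :=
  (1 - ‖z‖ ^ 2) / ‖1 - (starRingEnd ℂ) w * z‖ ^ 2

lemma norm_one_sub_conj_mul_sq_sub_norm_sub_sq (z w : ℂ) :
    ‖1 - (starRingEnd ℂ) w * z‖ ^ 2 - ‖z - w‖ ^ 2 = (1 - ‖z‖ ^ 2) * (1 - ‖w‖ ^ 2) := by
  simp only [Complex.sq_norm, Complex.normSq_apply, Complex.sub_re, Complex.sub_im,
    Complex.mul_re, Complex.mul_im, Complex.one_re, Complex.one_im, Complex.conj_re,
    Complex.conj_im]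
  ring

lemma one_sub_conj_mul_ne_zero {z w : ℂ} (hz : ‖z‖ < 1) (hw : ‖w‖ < 1) :
    1 - (starRingEnd ℂ) w * z ≠ 0 := by
  have : ‖(starRingEnd ℂ) w * z‖ < 1 := by
    rw [norm_mul, RCLike.norm_conj]
    nlinarith [norm_nonneg w, norm_nonneg z]
  intro h
  rw [← sub_eq_zero.mp h, norm_one] at this
  exact this.false

lemma discPoissonKernel_pos {z w : ℂ} (hz : ‖z‖ < 1) (hw : ‖w‖ < 1) :
    0 < discPoissonKernel z w := by
  have := norm_pos_iff.mpr (one_sub_conj_mul_ne_zero hz hw)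
  have : 0 < 1 - ‖z‖ ^ 2 := by nlinarith [norm_nonneg z]
  unfold discPoissonKernel
  positivity

lemma one_sub_pseudoHypDist_sq {z w : ℂ} (hz : ‖z‖ < 1) (hw : ‖w‖ < 1) :
    1 - pseudoHypDist z w ^ 2 = (1 - ‖w‖ ^ 2) * discPoissonKernel z w := by
  have hden : ‖1 - (starRingEnd ℂ) w * z‖ ^ 2 ≠ 0 := by
    have := norm_ne_zero_iff.mpr (one_sub_conj_mul_ne_zero hz hw)
    positivity
  rw [pseudoHypDist, discPoissonKernel, norm_div, div_pow, one_sub_div hden,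
    norm_one_sub_conj_mul_sq_sub_norm_sub_sq, mul_comm (1 - ‖z‖ ^ 2), mul_div_assoc]

lemma pseudoHypDist_lt_one {z w : ℂ} (hz : ‖z‖ < 1) (hw : ‖w‖ < 1) :
    pseudoHypDist z w < 1 := by
  have h := one_sub_pseudoHypDist_sq hz hw
  have : 0 < (1 - ‖w‖ ^ 2) * discPoissonKernel z w :=
    mul_pos (by nlinarith [norm_nonneg w]) (discPoissonKernel_pos hz hw)
  have : 0 ≤ pseudoHypDist z w := norm_nonneg _
  nlinarith

lemma hypDist_eq_artanh {z w : ℂ} (hz : ‖z‖ < 1) (hw : ‖w‖ < 1) :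
    hypDist z w = Real.artanh (pseudoHypDist z w) := by
  have : 0 ≤ pseudoHypDist z w := norm_nonneg _
  rw [Real.artanh_eq_half_log ⟨by linarith, (pseudoHypDist_lt_one hz hw).le⟩]
  rfl

lemma tanh_le_pseudoHypDist {z w : ℂ} (hz : ‖z‖ < 1) (hw : ‖w‖ < 1) {δ : ℝ}
    (h : δ ≤ hypDist z w) : Real.tanh δ ≤ pseudoHypDist z w := by
  rw [hypDist_eq_artanh hz hw, ← Real.artanh_tanh δ] at h
  have hρ : 0 ≤ pseudoHypDist z w := norm_nonneg _
  exact (Real.artanh_le_artanh_iff ⟨Real.neg_one_lt_tanh δ, Real.tanh_lt_one δ⟩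
    ⟨by linarith, pseudoHypDist_lt_one hz hw⟩).mp h

lemma norm_one_sub_conj_mul_eq_norm_sub {ξ : ℂ} (hξ : ‖ξ‖ = 1) (z : ℂ) :
    ‖1 - (starRingEnd ℂ) ξ * z‖ = ‖ξ - z‖ := by
  have : (starRingEnd ℂ) ξ * (ξ - z) = 1 - (starRingEnd ℂ) ξ * z := by
    rw [mul_sub, Complex.conj_mul', hξ]; simp
  rw [← this, norm_mul, RCLike.norm_conj, hξ, one_mul]

lemma ofReal_poissonInt_le_poissonMu {σ : Measure ℂ} (hσ : σ (sphere (0 : ℂ) 1)ᶜ = 0)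
    {z : ℂ} (hz : ‖z‖ ≤ 1) : ENNReal.ofReal (poissonInt σ z) ≤ poissonMu σ z := by
  have hnonneg : ∀ ξ : ℂ, 0 ≤ (1 - ‖z‖ ^ 2) / ‖ξ - z‖ ^ 2 := fun ξ => by
    have : 0 ≤ 1 - ‖z‖ ^ 2 := by nlinarith [norm_nonneg z]
    positivity
  have hsphere : poissonMu σ z = ∫⁻ ξ, ENNReal.ofReal ((1 - ‖z‖ ^ 2) / ‖ξ - z‖ ^ 2) ∂σ := by
    refine lintegral_congr_ae ?_
    filter_upwards [measure_eq_zero_iff_ae_notMem.mp hσ] with ξ hξ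
    rw [norm_one_sub_conj_mul_eq_norm_sub (by simpa using hξ)]
  rw [hsphere, poissonInt, integral_eq_lintegral_of_nonneg_ae (ae_of_all _ hnonneg)
    (Measurable.aestronglyMeasurable (by fun_prop))]
  exact ENNReal.ofReal_toReal_le

lemma poissonMu_add (μ ν : Measure ℂ) (z : ℂ) :
    poissonMu (μ + ν) z = poissonMu μ z + poissonMu ν z :=
  lintegral_add_measure _ _ _

lemma poissonMu_smul (c : ℝ≥0∞) (μ : Measure ℂ) (z : ℂ) :
    poissonMu (c • μ) z = c * poissonMu μ z :=
  lintegral_smul_measure _ _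

lemma poissonMu_zeroMassMeasure (f : ℂ → ℂ) (ord : ℂ → ℕ) (z : ℂ) :
    poissonMu (zeroMassMeasure f ord) z =
      ∑' w : {w : ℂ // w ∈ ball (0 : ℂ) 1 ∧ f w = 0},
        ENNReal.ofReal ((ord w : ℝ) * ((1 - ‖(w : ℂ)‖ ^ 2) * discPoissonKernel z w)) := by
  rw [poissonMu, zeroMassMeasure, lintegral_sum_measure]
  refine tsum_congr fun w => ?_
  have hw : 0 ≤ 1 - ‖(w : ℂ)‖ ^ 2 := by
    have := mem_ball_zero_iff.mp w.2.1
    nlinarith [norm_nonneg (w : ℂ)]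
  rw [lintegral_smul_measure, lintegral_dirac, smul_eq_mul, ENNReal.ofReal_mul (by positivity),
    ENNReal.ofReal_mul hw, ENNReal.ofReal_natCast, mul_assoc]
  rfl

lemma neg_two_mul_log_pseudoHypDist_le {z w : ℂ} (hz : ‖z‖ < 1) (hw : ‖w‖ < 1) {δ : ℝ}
    (hδ : 0 < δ) (h : δ ≤ hypDist z w) :
    -2 * Real.log (pseudoHypDist z w) ≤
      (Real.tanh δ ^ 2)⁻¹ * ((1 - ‖w‖ ^ 2) * discPoissonKernel z w) := by
  rw [← one_sub_pseudoHypDist_sq hz hw]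
  exact Real.neg_two_mul_log_le_inv_sq_mul_one_sub_sq (Real.tanh_pos hδ) (tanh_le_pseudoHypDist hz hw h)
    (pseudoHypDist_lt_one hz hw).le

lemma ofReal_tsum_neg_log_pseudoHypDist_le (f : ℂ → ℂ) (ord : ℂ → ℕ) {z : ℂ} (hz : ‖z‖ < 1)
    {δ : ℝ} (hδ : 0 < δ) (hfar : ∀ w ∈ ball (0 : ℂ) 1, f w = 0 → δ ≤ hypDist z w)
    (hsum : Summable fun w : {w : ℂ // w ∈ ball (0 : ℂ) 1 ∧ f w = 0} =>
      (ord w : ℝ) * (-2 * Real.log (pseudoHypDist z w))) :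
    ENNReal.ofReal (∑' w : {w : ℂ // w ∈ ball (0 : ℂ) 1 ∧ f w = 0},
        (ord w : ℝ) * (-2 * Real.log (pseudoHypDist z w))) ≤
      ENNReal.ofReal (Real.tanh δ ^ 2)⁻¹ * poissonMu (zeroMassMeasure f ord) z := by
  have hnonneg : ∀ w : {w : ℂ // w ∈ ball (0 : ℂ) 1 ∧ f w = 0},
      0 ≤ (ord w : ℝ) * (-2 * Real.log (pseudoHypDist z w)) := fun w => by
    have : Real.log (pseudoHypDist z w) ≤ 0 := Real.log_nonpos (norm_nonneg _)
      (pseudoHypDist_lt_one hz (mem_ball_zero_iff.mp w.2.1)).le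
    exact mul_nonneg (Nat.cast_nonneg _) (by linarith)
  rw [ENNReal.ofReal_tsum_of_nonneg hnonneg hsum, poissonMu_zeroMassMeasure,
    ← ENNReal.tsum_mul_left]
  refine ENNReal.tsum_le_tsum fun w => ?_
  have hw := mem_ball_zero_iff.mp w.2.1
  rw [← ENNReal.ofReal_mul (by positivity)]
  refine ENNReal.ofReal_le_ofReal ?_
  calc (ord w : ℝ) * (-2 * Real.log (pseudoHypDist z w))
      ≤ ord w * ((Real.tanh δ ^ 2)⁻¹ * ((1 - ‖(w : ℂ)‖ ^ 2) * discPoissonKernel z w)) :=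
        mul_le_mul_of_nonneg_left
          (neg_two_mul_log_pseudoHypDist_le hz hw hδ (hfar w w.2.1 w.2.2)) (Nat.cast_nonneg _)
    _ = _ := by ring

theorem statement3_general
    (f : ℂ → ℂ)
    (ord : ℂ → ℕ)
    (σ : Measure ℂ) (hsupp : σ (sphere (0 : ℂ) 1)ᶜ = 0)
    (hsummable : ∀ z ∈ ball (0 : ℂ) 1, f z ≠ 0 →
      Summable (fun w : {w : ℂ // w ∈ ball (0 : ℂ) 1 ∧ f w = 0} =>
        (ord (w : ℂ) : ℝ) *
          (-(2 : ℝ) * Real.log ‖(z - (w : ℂ)) / (1 - (starRingEnd ℂ) (w : ℂ) * z)‖)))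
    (hfac : ∀ z ∈ ball (0 : ℂ) 1, f z ≠ 0 →
      -(2 : ℝ) * Real.log ‖f z‖ =
        (∑' w : {w : ℂ // w ∈ ball (0 : ℂ) 1 ∧ f w = 0},
          (ord (w : ℂ) : ℝ) *
            (-(2 : ℝ) * Real.log ‖(z - (w : ℂ)) / (1 - (starRingEnd ℂ) (w : ℂ) * z)‖)) +
        2 * poissonInt σ z)
    (μ : Measure ℂ) (hμ : μ = zeroMassMeasure f ord + (2 : ℝ≥0∞) • σ) :
    ∃ C : ℝ → ℝ, Tendsto C atTop (nhds 1) ∧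
      ∀ δ > (0 : ℝ), 0 < C δ ∧
        ∀ z ∈ ball (0 : ℂ) 1,
          (∀ w ∈ ball (0 : ℂ) 1, f w = 0 → δ ≤ hypDist z w) →
          ENNReal.ofReal (-(2 : ℝ) * Real.log ‖f z‖) ≤
            ENNReal.ofReal (C δ) * poissonMu μ z := by
  refine ⟨fun δ => (Real.tanh δ ^ 2)⁻¹, tendsto_inv_tanh_sq_atTop, fun δ hδ => ?_⟩
  have htanh := Real.tanh_pos hδ
  refine ⟨by positivity, fun z hz hfar => ?_⟩
  have hfz : f z ≠ 0 := fun h0 => by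
    have : δ ≤ 0 := by simpa [hypDist] using hfar z hz h0
    linarith
  have hC : 1 ≤ ENNReal.ofReal (Real.tanh δ ^ 2)⁻¹ := by
    refine ENNReal.one_le_ofReal.mpr (one_le_inv₀ (by positivity) |>.mpr ?_)
    nlinarith [Real.tanh_lt_one δ]
  have hz1 := mem_ball_zero_iff.mp hz
  rw [hfac z hz hfz, hμ, poissonMu_add, poissonMu_smul, mul_add]
  calc _ ≤ ENNReal.ofReal (∑' w : {w : ℂ // w ∈ ball (0 : ℂ) 1 ∧ f w = 0},
          (ord w : ℝ) * (-2 * Real.log (pseudoHypDist z w))) +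
        ENNReal.ofReal (2 * poissonInt σ z) := ENNReal.ofReal_add_le
    _ ≤ _ := by
      gcongr
      · exact ofReal_tsum_neg_log_pseudoHypDist_le f ord hz1 hδ hfar (hsummable z hz hfz)
      · rw [ENNReal.ofReal_mul zero_le_two, ENNReal.ofReal_ofNat]
        exact le_mul_of_one_le_of_le hC
          (by gcongr; exact ofReal_poissonInt_le_poissonMu hsupp hz1.le)

/-- Lemma 3(b): `log |f(z)|⁻² ≤ C(δ) P[μ](z)` far from the zeros, with `C(δ) → 1`. -/
theorem statement3
    (f : ℂ → ℂ) (hf : DifferentiableOn ℂ f (ball (0 : ℂ) 1))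
    (hmap : ∀ z ∈ ball (0 : ℂ) 1, f z ∈ ball (0 : ℂ) 1)
    (hne : ∃ z ∈ ball (0 : ℂ) 1, f z ≠ 0)
    (ord : ℂ → ℕ)
    (hord : ∀ w ∈ ball (0 : ℂ) 1, f w = 0 →
      ∃ g : ℂ → ℂ, AnalyticAt ℂ g w ∧ g w ≠ 0 ∧
        ∀ᶠ ζ in nhds w, f ζ = (ζ - w) ^ ord w * g ζ)
    (σ : Measure ℂ) [IsFiniteMeasure σ] (hsupp : σ (sphere (0 : ℂ) 1)ᶜ = 0)
    (hsummable : ∀ z ∈ ball (0 : ℂ) 1, f z ≠ 0 →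
      Summable (fun w : {w : ℂ // w ∈ ball (0 : ℂ) 1 ∧ f w = 0} =>
        (ord (w : ℂ) : ℝ) *
          (-(2 : ℝ) * Real.log ‖(z - (w : ℂ)) / (1 - (starRingEnd ℂ) (w : ℂ) * z)‖)))
    (hfac : ∀ z ∈ ball (0 : ℂ) 1, f z ≠ 0 →
      -(2 : ℝ) * Real.log ‖f z‖ =
        (∑' w : {w : ℂ // w ∈ ball (0 : ℂ) 1 ∧ f w = 0},
          (ord (w : ℂ) : ℝ) *
            (-(2 : ℝ) * Real.log ‖(z - (w : ℂ)) / (1 - (starRingEnd ℂ) (w : ℂ) * z)‖)) +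
        2 * poissonInt σ z)
    (μ : Measure ℂ) (hμ : μ = zeroMassMeasure f ord + (2 : ℝ≥0∞) • σ) :
    ∃ C : ℝ → ℝ, Tendsto C atTop (nhds 1) ∧
      ∀ δ > (0 : ℝ), 0 < C δ ∧
        ∀ z ∈ ball (0 : ℂ) 1,
          (∀ w ∈ ball (0 : ℂ) 1, f w = 0 → δ ≤ hypDist z w) →
          ENNReal.ofReal (-(2 : ℝ) * Real.log ‖f z‖) ≤
            ENNReal.ofReal (C δ) * poissonMu μ z :=
  statement3_general f ord σ hsupp hsummable hfac μ hμ

end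
end

section
/- Let σ be a finite positive Borel measure on ∂𝔻 with Poisson integral u(z) = ∫_{∂𝔻} (1−|z|²)/|ξ−z|² dσ(ξ), and suppose there exists c > 0 such that σ(I) ≥ c·|I|·u(z_I) for every arc I ⊂ ∂𝔻 (z_I = (1−|I|)ξ_I, ξ_I the center of I). Then there exists a constant D = D(c) ∈ (0,1) such that for every z ∈ 𝔻, | ∫_{∂𝔻} (1−|z|²) / (|ξ−z|² · τ_z(ξ)) dσ(ξ) | ≤ D · ∫_{∂𝔻} (1−|z|²)/|ξ−z|² dσ(ξ), where τ_z(ξ) = (ξ−z)/(1−z̄ξ). -/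
open MeasureTheory Complex Set Metric Filter
open scoped ENNReal NNReal Topology

noncomputable section

/-!
Write `τ = τ_z`, `P = P_z` and `u = poissonInt σ`. On the circle `|τ| = 1`, so `1/τ = conj τ` and
for every unimodular `a` we have `Re (a P/τ) = P - P |a - τ|² / 2`. Rotating the integral
onto the positive axis, it suffices to bound the defect `∫ P |λ - τ|² dσ` from below by `ε u(z)`,
uniformly in `λ ∈ ℂ`.

Write `z = (1 - t) ξ₀`. The two arcs of length `t/8` centred at `e^{± iπt/4} ξ₀` lie within `3t`
of `z`, so `P ≥ 1/(9t)` on them, and they are `t/2` apart, so `τ` maps them to sets at distance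
`≥ 1/18`. Hence `λ` is `1/36`-far from the image of one of them, call it `I`. By hypothesis
`σ(I) ≥ c (t/8) u(z_I)`, and Harnack's inequality for the Poisson kernel (`|z - z_I| ≤ 2t`) gives
`u(z_I) ≥ u(z)/144`; together `∫_I P |λ - τ|² dσ ≥ c u(z) / (1152 · 9 · 36²)`.
-/

open scoped Real ComplexConjugate

lemma re_mul_eq_one_sub_norm_conj_sub_sq {a b : ℂ} (ha : ‖a‖ = 1) (hb : ‖b‖ = 1) :
    (a * b).re = 1 - ‖conj a - b‖ ^ 2 / 2 := by
  rw [Complex.sq_norm, normSq_sub, normSq_conj, ← map_mul, conj_re, ← Complex.sq_norm,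
    ← Complex.sq_norm, ha, hb]
  ring

theorem norm_integral_ofReal_mul_le {α : Type*} [MeasurableSpace α] {μ : Measure α}
    {p : α → ℝ} {g : α → ℂ} (hp : Integrable p μ) (hg : AEStronglyMeasurable g μ)
    (hg1 : ∀ᵐ x ∂μ, ‖g x‖ = 1) {δ : ℝ}
    (hδ : ∀ a : ℂ, ‖a‖ = 1 → δ ≤ ∫ x, p x * ‖a - g x‖ ^ 2 ∂μ) :
    ‖∫ x, (p x : ℂ) * g x ∂μ‖ ≤ ∫ x, p x ∂μ - δ / 2 := by
  set w := ∫ x, (p x : ℂ) * g x ∂μ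
  set a := exp (-(arg w : ℂ) * I)
  have ha : ‖a‖ = 1 := by simpa [a] using norm_exp_ofReal_mul_I (-arg w)
  have haw : a * w = ‖w‖ := by
    conv_lhs => rw [← norm_mul_exp_arg_mul_I w]
    rw [mul_left_comm, ← Complex.exp_add]; simp
  have hpg : Integrable (fun x => (p x : ℂ) * g x) μ :=
    hp.ofReal.mul_bdd hg (hg1.mono fun x hx => hx.le)
  have hdefect : Integrable (fun x => p x * ‖conj a - g x‖ ^ 2) μ := by
    refine hp.mul_bdd (by fun_prop) (c := 4) (hg1.mono fun x hx => ?_)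
    have : ‖conj a - g x‖ ≤ 2 :=
      (norm_sub_le _ _).trans_eq (by rw [RCLike.norm_conj, ha, hx]; norm_num)
    rw [norm_pow, norm_norm]; nlinarith [norm_nonneg (conj a - g x)]
  have hre : ∀ᵐ x ∂μ, (a * ((p x : ℂ) * g x)).re = p x - p x * ‖conj a - g x‖ ^ 2 / 2 :=
    hg1.mono fun x hx => by
      rw [mul_left_comm, re_ofReal_mul, re_mul_eq_one_sub_norm_conj_sub_sq ha hx]; ring
  calc ‖w‖ = (a * w).re := by rw [haw, ofReal_re]
    _ = ∫ x, (a * ((p x : ℂ) * g x)).re ∂μ := by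
      rw [← integral_const_mul]; exact (integral_re (hpg.const_mul a)).symm
    _ = ∫ x, p x ∂μ - (∫ x, p x * ‖conj a - g x‖ ^ 2 ∂μ) / 2 := by
      rw [integral_congr_ae hre, integral_sub hp (hdefect.div_const 2), integral_div]
    _ ≤ ∫ x, p x ∂μ - δ / 2 := by linarith [hδ (conj a) (by rw [RCLike.norm_conj, ha])]

lemma norm_exp_mul_sub_exp_mul {ξ₀ : ℂ} (hξ₀ : ‖ξ₀‖ = 1) (α β : ℝ) :
    ‖exp (α * I) * ξ₀ - exp (β * I) * ξ₀‖ = ‖exp (I * ↑(α - β)) - 1‖ := by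
  have : exp (α * I) * ξ₀ - exp (β * I) * ξ₀ = exp (β * I) * (exp (I * ↑(α - β)) - 1) * ξ₀ := by
    rw [mul_sub, ← Complex.exp_add]; push_cast; ring_nf
  rw [this, norm_mul, norm_mul, norm_exp_ofReal_mul_I, hξ₀, one_mul, mul_one]

lemma norm_exp_mul_sub_self_le {ξ₀ : ℂ} (hξ₀ : ‖ξ₀‖ = 1) (α : ℝ) :
    ‖exp (α * I) * ξ₀ - ξ₀‖ ≤ |α| := by
  simpa [hξ₀] using (norm_exp_mul_sub_exp_mul hξ₀ α 0).trans_le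
    Real.norm_exp_I_mul_ofReal_sub_one_le

lemma mul_le_norm_exp_I_mul_sub_one {x : ℝ} (hx : 0 ≤ x) (hxπ : x ≤ π) :
    2 / π * x ≤ ‖exp (I * x) - 1‖ := by
  rw [norm_exp_I_mul_ofReal_sub_one, norm_mul, Real.norm_two,
    Real.norm_of_nonneg (Real.sin_nonneg_of_nonneg_of_le_pi (by linarith) (by linarith))]
  linarith [Real.mul_le_sin (x := x / 2) (by linarith) (by linarith)]

lemma norm_one_sub_ofReal_mul {t : ℝ} {ξ₀ : ℂ} (ht1 : t ≤ 1) (hξ₀ : ‖ξ₀‖ = 1) :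
    ‖(1 - t : ℂ) * ξ₀‖ = 1 - t := by
  rw [← ofReal_one, ← ofReal_sub, norm_mul, hξ₀, mul_one, norm_real,
    Real.norm_of_nonneg (by linarith)]

lemma exists_eq_one_sub_ofReal_mul {z : ℂ} (hz : ‖z‖ < 1) :
    ∃ t ∈ Ioc (0 : ℝ) 1, ∃ ξ₀ : ℂ, ‖ξ₀‖ = 1 ∧ z = (1 - t : ℂ) * ξ₀ :=
  ⟨1 - ‖z‖, ⟨by linarith, by linarith [norm_nonneg z]⟩, exp (arg z * I),
    norm_exp_ofReal_mul_I _, by push_cast; rw [sub_sub_cancel, norm_mul_exp_arg_mul_I]⟩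

lemma measurableSet_bdryArc (ξ : ℂ) (r : ℝ) : MeasurableSet (bdryArc ξ r) := by
  have : bdryArc ξ r = (fun θ : ℝ => exp (θ * I) * ξ) '' Icc (-(π * r)) (π * r) := by
    ext η; simp [bdryArc, abs_le, eq_comm]
  rw [this]
  exact (isCompact_Icc.image (by fun_prop)).measurableSet

lemma exists_of_mem_bdryArc_exp_mul {η ξ₀ : ℂ} {β r : ℝ}
    (h : η ∈ bdryArc (exp (β * I) * ξ₀) r) :
    ∃ α : ℝ, |α - β| ≤ π * r ∧ η = exp (α * I) * ξ₀ := by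
  obtain ⟨θ, hθ, rfl⟩ := h
  refine ⟨θ + β, by simpa using hθ, ?_⟩
  rw [← mul_assoc, ← Complex.exp_add]; push_cast; ring_nf

namespace UnitDisc

def poissonKernel (z ξ : ℂ) : ℝ := (1 - ‖z‖ ^ 2) / ‖ξ - z‖ ^ 2

def mobius (z ξ : ℂ) : ℂ := (ξ - z) / (1 - conj z * ξ)

section Kernels

variable {z ξ : ℂ}

lemma one_sub_norm_sq_pos (hz : ‖z‖ < 1) : 0 < 1 - ‖z‖ ^ 2 :=
  sub_pos.2 (pow_lt_one₀ (norm_nonneg z) hz two_ne_zero)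

lemma one_sub_norm_le_norm_sub (hξ : ‖ξ‖ = 1) : 1 - ‖z‖ ≤ ‖ξ - z‖ :=
  hξ ▸ norm_sub_norm_le ξ z

lemma norm_sub_pos (hz : ‖z‖ < 1) (hξ : ‖ξ‖ = 1) : 0 < ‖ξ - z‖ :=
  (sub_pos.2 hz).trans_le (one_sub_norm_le_norm_sub hξ)

lemma norm_one_sub_conj_mul (hξ : ‖ξ‖ = 1) : ‖1 - conj z * ξ‖ = ‖ξ - z‖ := by
  have h : 1 - conj z * ξ = ξ * conj (ξ - z) := by
    rw [map_sub, mul_sub, mul_conj', hξ]; push_cast; ring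
  rw [h, norm_mul, hξ, one_mul, RCLike.norm_conj]

lemma norm_mobius (hz : ‖z‖ < 1) (hξ : ‖ξ‖ = 1) : ‖mobius z ξ‖ = 1 := by
  rw [mobius, norm_div, norm_one_sub_conj_mul hξ, div_self (norm_sub_pos hz hξ).ne']

lemma norm_sub_inv_mobius (hz : ‖z‖ < 1) (hξ : ‖ξ‖ = 1) (a : ℂ) :
    ‖a - (mobius z ξ)⁻¹‖ = ‖conj a - mobius z ξ‖ := by
  rw [Complex.inv_eq_conj (norm_mobius hz hξ), ← RCLike.norm_conj, map_sub, conj_conj]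

lemma norm_mobius_sub_mobius (hz : ‖z‖ < 1) {ξ₁ ξ₂ : ℂ} (hξ₁ : ‖ξ₁‖ = 1) (hξ₂ : ‖ξ₂‖ = 1) :
    ‖mobius z ξ₁ - mobius z ξ₂‖ = (1 - ‖z‖ ^ 2) * ‖ξ₁ - ξ₂‖ / (‖ξ₁ - z‖ * ‖ξ₂ - z‖) := by
  have h₁ : 1 - conj z * ξ₁ ≠ 0 :=
    norm_ne_zero_iff.1 <| (norm_one_sub_conj_mul hξ₁).trans_ne (norm_sub_pos hz hξ₁).ne'
  have h₂ : 1 - conj z * ξ₂ ≠ 0 :=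
    norm_ne_zero_iff.1 <| (norm_one_sub_conj_mul hξ₂).trans_ne (norm_sub_pos hz hξ₂).ne'
  have key : mobius z ξ₁ - mobius z ξ₂ = ((1 - ‖z‖ ^ 2 : ℝ) : ℂ) * (ξ₁ - ξ₂) /
      ((1 - conj z * ξ₁) * (1 - conj z * ξ₂)) := by
    rw [mobius, mobius, div_sub_div _ _ h₁ h₂, ofReal_sub, ofReal_one, ofReal_pow, ← mul_conj']
    ring
  rw [key, norm_div, norm_mul, norm_mul, norm_one_sub_conj_mul hξ₁, norm_one_sub_conj_mul hξ₂,
    norm_real, Real.norm_of_nonneg (one_sub_norm_sq_pos hz).le]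

lemma measurable_mobius (z : ℂ) : Measurable (mobius z) := by
  unfold mobius; fun_prop

lemma measurable_poissonKernel (z : ℂ) : Measurable (poissonKernel z) := by
  unfold poissonKernel; fun_prop

lemma poissonKernel_nonneg (hz : ‖z‖ < 1) (ξ : ℂ) : 0 ≤ poissonKernel z ξ :=
  div_nonneg (one_sub_norm_sq_pos hz).le (sq_nonneg _)

lemma poissonKernel_le (hz : ‖z‖ < 1) (hξ : ‖ξ‖ = 1) :
    poissonKernel z ξ ≤ (1 - ‖z‖ ^ 2) / (1 - ‖z‖) ^ 2 :=
  div_le_div_of_nonneg_left (one_sub_norm_sq_pos hz).le (pow_pos (sub_pos.2 hz) 2)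
    (pow_le_pow_left₀ (sub_pos.2 hz).le (one_sub_norm_le_norm_sub hξ) 2)

lemma poissonKernel_harnack {w : ℂ} (hz : ‖z‖ < 1) (hw : ‖w‖ < 1) (hξ : ‖ξ‖ = 1) :
    (1 - ‖w‖ ^ 2) * (1 - ‖z‖) ^ 2 * poissonKernel z ξ ≤
      (1 - ‖z‖ ^ 2) * (1 - ‖z‖ + ‖z - w‖) ^ 2 * poissonKernel w ξ := by
  have hb := norm_sub_pos hw hξ
  have key : (1 - ‖z‖) * ‖ξ - w‖ ≤ (1 - ‖z‖ + ‖z - w‖) * ‖ξ - z‖ := by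
    have := norm_sub_le_norm_sub_add_norm_sub ξ z w
    nlinarith [norm_nonneg (z - w), one_sub_norm_le_norm_sub (z := z) hξ]
  have hA : 0 ≤ (1 - ‖w‖ ^ 2) * (1 - ‖z‖ ^ 2) :=
    (mul_pos (one_sub_norm_sq_pos hw) (one_sub_norm_sq_pos hz)).le
  have hsq : ((1 - ‖z‖) * ‖ξ - w‖) ^ 2 ≤ ((1 - ‖z‖ + ‖z - w‖) * ‖ξ - z‖) ^ 2 :=
    pow_le_pow_left₀ (mul_nonneg (by linarith) hb.le) key 2
  simp only [poissonKernel]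
  rw [mul_div_assoc', mul_div_assoc',
    div_le_div_iff₀ (pow_pos (norm_sub_pos hz hξ) 2) (pow_pos hb 2)]
  nlinarith [mul_le_mul_of_nonneg_left hsq hA]

end Kernels

lemma poissonInt_nonneg (σ : Measure ℂ) {z : ℂ} (hz : ‖z‖ < 1) : 0 ≤ poissonInt σ z :=
  integral_nonneg (poissonKernel_nonneg hz)

def sideCenter (ξ₀ : ℂ) (t s : ℝ) : ℂ := exp (↑(s * (π * t / 4)) * I) * ξ₀

def sideArc (ξ₀ : ℂ) (t s : ℝ) : Set ℂ := bdryArc (sideCenter ξ₀ t s) (t / 8)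

section SideArcs

variable {t s : ℝ} {ξ₀ ξ : ℂ}

lemma norm_sideCenter (hξ₀ : ‖ξ₀‖ = 1) : ‖sideCenter ξ₀ t s‖ = 1 := by
  rw [sideCenter, norm_mul, norm_exp_ofReal_mul_I, hξ₀, one_mul]

lemma abs_mul_pi_mul_div_four_le (hs : |s| ≤ 1) (ht : 0 < t) : |s * (π * t / 4)| ≤ π * t / 4 := by
  rw [abs_mul, abs_of_pos (show 0 < π * t / 4 by positivity)]
  exact mul_le_of_le_one_left (by positivity) hs

lemma norm_sideCenter_sub_le (hs : |s| ≤ 1) (ht : 0 < t) (hξ₀ : ‖ξ₀‖ = 1) :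
    ‖sideCenter ξ₀ t s - ξ₀‖ ≤ π * t / 4 :=
  (norm_exp_mul_sub_self_le hξ₀ _).trans (abs_mul_pi_mul_div_four_le hs ht)

lemma norm_of_mem_sideArc (hξ₀ : ‖ξ₀‖ = 1) (hξ : ξ ∈ sideArc ξ₀ t s) : ‖ξ‖ = 1 := by
  obtain ⟨α, -, rfl⟩ := exists_of_mem_bdryArc_exp_mul hξ
  rw [norm_mul, norm_exp_ofReal_mul_I, hξ₀, one_mul]

lemma norm_sub_le_of_mem_sideArc (hs : |s| ≤ 1) (ht : 0 < t) (hξ₀ : ‖ξ₀‖ = 1)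
    (hξ : ξ ∈ sideArc ξ₀ t s) : ‖ξ - (1 - t : ℂ) * ξ₀‖ ≤ 3 * t := by
  obtain ⟨α, hα, rfl⟩ := exists_of_mem_bdryArc_exp_mul hξ
  have hα' : |α| ≤ 3 * π * t / 8 := by
    linarith [abs_sub_abs_le_abs_sub α (s * (π * t / 4)), abs_mul_pi_mul_div_four_le hs ht]
  have h₂ : ‖ξ₀ - (1 - t : ℂ) * ξ₀‖ = t := by
    rw [show ξ₀ - (1 - t : ℂ) * ξ₀ = (t : ℂ) * ξ₀ by ring, norm_mul, hξ₀,
      norm_real, Real.norm_of_nonneg ht.le, mul_one]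
  have := norm_sub_le_norm_sub_add_norm_sub (exp (α * I) * ξ₀) ξ₀ ((1 - t : ℂ) * ξ₀)
  nlinarith [Real.pi_lt_four, norm_exp_mul_sub_self_le hξ₀ α]

lemma inv_le_poissonKernel_of_mem_sideArc (hs : |s| ≤ 1) (ht : 0 < t) (ht1 : t ≤ 1)
    (hξ₀ : ‖ξ₀‖ = 1) (hξ : ξ ∈ sideArc ξ₀ t s) :
    (9 * t)⁻¹ ≤ poissonKernel ((1 - t : ℂ) * ξ₀) ξ := by
  have hz := norm_one_sub_ofReal_mul ht1 hξ₀
  have hd := norm_sub_le_of_mem_sideArc hs ht hξ₀ hξ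
  have hd₀ := norm_sub_pos (hz.trans_lt (by linarith)) (norm_of_mem_sideArc hξ₀ hξ)
  rw [poissonKernel, hz, inv_eq_one_div, div_le_div_iff₀ (by positivity) (by positivity)]
  nlinarith [pow_le_pow_left₀ hd₀.le hd 2]

lemma inv_le_norm_mobius_sub_mobius (ht : 0 < t) (ht1 : t ≤ 1) (hξ₀ : ‖ξ₀‖ = 1) {ξ₁ ξ₂ : ℂ}
    (hξ₁ : ξ₁ ∈ sideArc ξ₀ t (-1)) (hξ₂ : ξ₂ ∈ sideArc ξ₀ t 1) :
    (18 : ℝ)⁻¹ ≤ ‖mobius ((1 - t : ℂ) * ξ₀) ξ₁ - mobius ((1 - t : ℂ) * ξ₀) ξ₂‖ := by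
  have hz := norm_one_sub_ofReal_mul ht1 hξ₀
  have hu₁ := norm_of_mem_sideArc hξ₀ hξ₁
  have hu₂ := norm_of_mem_sideArc hξ₀ hξ₂
  have hd₁ := norm_sub_le_of_mem_sideArc (by norm_num) ht hξ₀ hξ₁
  have hd₂ := norm_sub_le_of_mem_sideArc (by norm_num) ht hξ₀ hξ₂
  have hp₁ := norm_sub_pos (hz.trans_lt (by linarith)) hu₁
  have hp₂ := norm_sub_pos (hz.trans_lt (by linarith)) hu₂
  -- the two arcs are `π t / 4` apart in angle, hence `t / 2` apart in chordal distance
  have hchord : t / 2 ≤ ‖ξ₁ - ξ₂‖ := by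
    obtain ⟨α₁, hα₁, rfl⟩ := exists_of_mem_bdryArc_exp_mul hξ₁
    obtain ⟨α₂, hα₂, rfl⟩ := exists_of_mem_bdryArc_exp_mul hξ₂
    rw [abs_le] at hα₁ hα₂
    rw [norm_sub_rev, norm_exp_mul_sub_exp_mul hξ₀]
    refine le_trans ?_ (mul_le_norm_exp_I_mul_sub_one (by nlinarith [Real.pi_pos])
      (by nlinarith [Real.pi_pos]))
    rw [div_mul_eq_mul_div, le_div_iff₀ Real.pi_pos]
    nlinarith [Real.pi_pos]
  rw [norm_mobius_sub_mobius (hz.trans_lt (by linarith)) hu₁ hu₂, hz,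
    le_div_iff₀ (by positivity)]
  have hnum : t * (t / 2) ≤ (1 - (1 - t) ^ 2) * ‖ξ₁ - ξ₂‖ :=
    mul_le_mul (by nlinarith) hchord (by positivity) (by nlinarith)
  nlinarith [mul_le_mul hd₁ hd₂ hp₂.le (by positivity)]

lemma exists_sideArc_forall_le_norm_sub_mobius (ht : 0 < t) (ht1 : t ≤ 1) (hξ₀ : ‖ξ₀‖ = 1)
    (a : ℂ) :
    ∃ s : ℝ, |s| ≤ 1 ∧ ∀ ξ ∈ sideArc ξ₀ t s, (36 : ℝ)⁻¹ ≤ ‖a - mobius ((1 - t : ℂ) * ξ₀) ξ‖ := by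
  set τ := mobius ((1 - t : ℂ) * ξ₀)
  by_cases h : ∃ ξ₁ ∈ sideArc ξ₀ t (-1), ‖a - τ ξ₁‖ < (36 : ℝ)⁻¹
  · obtain ⟨ξ₁, hξ₁, hnear⟩ := h
    refine ⟨1, by norm_num, fun ξ₂ hξ₂ => ?_⟩
    have := inv_le_norm_mobius_sub_mobius ht ht1 hξ₀ hξ₁ hξ₂
    have := norm_sub_le_norm_sub_add_norm_sub (τ ξ₁) a (τ ξ₂)
    linarith [norm_sub_rev (τ ξ₁) a]
  · exact ⟨-1, by norm_num, fun ξ hξ => not_lt.1 fun hlt => h ⟨ξ, hξ, hlt⟩⟩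

end SideArcs

def ArcMassCondition (σ : Measure ℂ) (c : ℝ) : Prop :=
  ∀ ξ : ℂ, ‖ξ‖ = 1 → ∀ t ∈ Ioc (0 : ℝ) 1,
    c * (t * poissonInt σ (((1 : ℝ) - t) * ξ)) ≤ (σ (bdryArc ξ t)).toReal

section PoissonIntegral

variable {σ : Measure ℂ} [IsFiniteMeasure σ]

lemma integrable_poissonKernel (hσ : ∀ᵐ ξ ∂σ, ‖ξ‖ = 1) {z : ℂ} (hz : ‖z‖ < 1) :
    Integrable (poissonKernel z) σ :=
  Integrable.of_bound (measurable_poissonKernel z).aestronglyMeasurable _ <|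
    hσ.mono fun ξ hξ => by
      rw [Real.norm_of_nonneg (poissonKernel_nonneg hz ξ)]; exact poissonKernel_le hz hξ

lemma integrable_poissonKernel_mul_norm_sub_mobius_sq (hσ : ∀ᵐ ξ ∂σ, ‖ξ‖ = 1) {z : ℂ}
    (hz : ‖z‖ < 1) (a : ℂ) : Integrable (fun ξ => poissonKernel z ξ * ‖a - mobius z ξ‖ ^ 2) σ := by
  refine (integrable_poissonKernel hσ hz).mul_bdd (c := (‖a‖ + 1) ^ 2)
    (((measurable_mobius z).const_sub a).norm.pow_const 2).aestronglyMeasurable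
    (hσ.mono fun ξ hξ => ?_)
  rw [norm_pow, norm_norm]
  exact pow_le_pow_left₀ (norm_nonneg _)
    ((norm_sub_le _ _).trans_eq (by rw [norm_mobius hz hξ])) 2

lemma poissonInt_harnack (hσ : ∀ᵐ ξ ∂σ, ‖ξ‖ = 1) {z w : ℂ} (hz : ‖z‖ < 1) (hw : ‖w‖ < 1) :
    (1 - ‖w‖ ^ 2) * (1 - ‖z‖) ^ 2 * poissonInt σ z ≤
      (1 - ‖z‖ ^ 2) * (1 - ‖z‖ + ‖z - w‖) ^ 2 * poissonInt σ w := by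
  simp only [poissonInt, ← integral_const_mul]
  exact integral_mono_ae ((integrable_poissonKernel hσ hz).const_mul _)
    ((integrable_poissonKernel hσ hw).const_mul _)
    (hσ.mono fun ξ hξ => poissonKernel_harnack hz hw hξ)

variable {t s : ℝ} {ξ₀ : ℂ}

lemma poissonInt_le_mul_poissonInt_sideCenter (hσ : ∀ᵐ ξ ∂σ, ‖ξ‖ = 1) (hs : |s| ≤ 1)
    (ht : 0 < t) (ht1 : t ≤ 1) (hξ₀ : ‖ξ₀‖ = 1) :
    poissonInt σ ((1 - t : ℂ) * ξ₀) ≤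
      144 * poissonInt σ ((1 - (t / 8 : ℝ) : ℂ) * sideCenter ξ₀ t s) := by
  set z := (1 - t : ℂ) * ξ₀
  set ζ := sideCenter ξ₀ t s
  set w := (1 - (t / 8 : ℝ) : ℂ) * ζ
  have hζ : ‖ζ‖ = 1 := norm_sideCenter hξ₀
  have hz : ‖z‖ = 1 - t := norm_one_sub_ofReal_mul ht1 hξ₀
  have hw : ‖w‖ = 1 - t / 8 := norm_one_sub_ofReal_mul (by linarith) hζ
  have hzw : ‖z - w‖ ≤ 2 * t := by
    have hsplit : z - w = ((1 - t : ℝ) : ℂ) * (ξ₀ - ζ) - ((7 * t / 8 : ℝ) : ℂ) * ζ := by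
      simp only [z, w]; push_cast; ring
    rw [hsplit]
    refine (norm_sub_le _ _).trans ?_
    rw [norm_mul, norm_mul, norm_sub_rev, hζ, norm_real, norm_real,
      Real.norm_of_nonneg (by linarith), Real.norm_of_nonneg (by linarith)]
    have hζξ₀ : ‖ζ - ξ₀‖ ≤ t :=
      (norm_sideCenter_sub_le hs ht hξ₀).trans (by nlinarith [Real.pi_lt_four])
    nlinarith [mul_nonneg ht.le (norm_nonneg (ζ - ξ₀))]
  have hharnack := poissonInt_harnack hσ (hz.trans_lt (by linarith)) (hw.trans_lt (by linarith))
  rw [hz, hw] at hharnack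
  have hu := poissonInt_nonneg σ (hz.trans_lt (by linarith) : ‖z‖ < 1)
  have huw := poissonInt_nonneg σ (hw.trans_lt (by linarith) : ‖w‖ < 1)
  have hw₂ : t / 8 ≤ 1 - (1 - t / 8) ^ 2 := by nlinarith
  have hz₂ : 1 - (1 - t) ^ 2 ≤ 2 * t := by nlinarith
  have h₁ : t / 8 * t ^ 2 * poissonInt σ z ≤
      (1 - (1 - t / 8) ^ 2) * (1 - (1 - t)) ^ 2 * poissonInt σ z := by
    gcongr <;> linarith
  have h₂ : (1 - (1 - t) ^ 2) * (1 - (1 - t) + ‖z - w‖) ^ 2 * poissonInt σ w ≤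
      2 * t * (3 * t) ^ 2 * poissonInt σ w := by
    gcongr <;> linarith [norm_nonneg (z - w)]
  have : 0 < t ^ 3 := by positivity
  nlinarith

lemma mul_poissonInt_le_measure_sideArc (hσ : ∀ᵐ ξ ∂σ, ‖ξ‖ = 1) {c : ℝ} (hc : 0 ≤ c)
    (hb : ArcMassCondition σ c) (hs : |s| ≤ 1) (ht : 0 < t) (ht1 : t ≤ 1) (hξ₀ : ‖ξ₀‖ = 1) :
    c * t * poissonInt σ ((1 - t : ℂ) * ξ₀) / 1152 ≤ σ.real (sideArc ξ₀ t s) := by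
  -- `(1 - t / 8) * sideCenter ξ₀ t s` is the point `z_I` of the arc `I = sideArc ξ₀ t s`
  have hmass := hb (sideCenter ξ₀ t s) (norm_sideCenter hξ₀) (t / 8) ⟨by positivity, by linarith⟩
  rw [ofReal_one] at hmass
  calc c * t * poissonInt σ ((1 - t : ℂ) * ξ₀) / 1152
      = c * (t / 8 * (poissonInt σ ((1 - t : ℂ) * ξ₀) / 144)) := by ring
    _ ≤ c * (t / 8 * poissonInt σ ((1 - (t / 8 : ℝ) : ℂ) * sideCenter ξ₀ t s)) := by
      gcongr; linarith [poissonInt_le_mul_poissonInt_sideCenter hσ hs ht ht1 hξ₀]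
    _ ≤ σ.real (sideArc ξ₀ t s) := hmass

theorem mul_poissonInt_le_integral_poissonKernel_mul_norm_sub_mobius_sq
    (hσ : ∀ᵐ ξ ∂σ, ‖ξ‖ = 1) {c : ℝ} (hc : 0 ≤ c) (hb : ArcMassCondition σ c) {z : ℂ}
    (hz : ‖z‖ < 1) (a : ℂ) :
    c / (1152 * 9 * 36 ^ 2) * poissonInt σ z ≤
      ∫ ξ, poissonKernel z ξ * ‖a - mobius z ξ‖ ^ 2 ∂σ := by
  obtain ⟨t, ⟨ht, ht1⟩, ξ₀, hξ₀, rfl⟩ := exists_eq_one_sub_ofReal_mul hz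
  obtain ⟨s, hs, hfar⟩ := exists_sideArc_forall_le_norm_sub_mobius ht ht1 hξ₀ a
  set z := (1 - t : ℂ) * ξ₀
  set A := sideArc ξ₀ t s
  have hbound : ∀ ξ ∈ A, (9 * t)⁻¹ * (36 : ℝ)⁻¹ ^ 2 ≤ poissonKernel z ξ * ‖a - mobius z ξ‖ ^ 2 :=
    fun ξ hξ => mul_le_mul (inv_le_poissonKernel_of_mem_sideArc hs ht ht1 hξ₀ hξ)
      (pow_le_pow_left₀ (by positivity) (hfar ξ hξ) 2) (by positivity)
      (poissonKernel_nonneg hz ξ)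
  have hint := integrable_poissonKernel_mul_norm_sub_mobius_sq hσ hz a
  calc c / (1152 * 9 * 36 ^ 2) * poissonInt σ z
      = (9 * t)⁻¹ * (36 : ℝ)⁻¹ ^ 2 * (c * t * poissonInt σ z / 1152) := by
        field_simp
    _ ≤ (9 * t)⁻¹ * (36 : ℝ)⁻¹ ^ 2 * σ.real A := by
        gcongr; exact mul_poissonInt_le_measure_sideArc hσ hc hb hs ht ht1 hξ₀
    _ ≤ ∫ ξ in A, poissonKernel z ξ * ‖a - mobius z ξ‖ ^ 2 ∂σ :=
        setIntegral_ge_of_const_le_real (measurableSet_bdryArc _ _) (measure_ne_top σ A) hbound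
          hint.integrableOn
    _ ≤ ∫ ξ, poissonKernel z ξ * ‖a - mobius z ξ‖ ^ 2 ∂σ :=
        setIntegral_le_integral hint (Eventually.of_forall fun ξ =>
          mul_nonneg (poissonKernel_nonneg hz ξ) (sq_nonneg _))

theorem norm_integral_poissonKernel_mul_inv_mobius_le (hσ : ∀ᵐ ξ ∂σ, ‖ξ‖ = 1) {c : ℝ}
    (hc : 0 ≤ c) (hb : ArcMassCondition σ c) {z : ℂ} (hz : ‖z‖ < 1) :
    ‖∫ ξ, (poissonKernel z ξ : ℂ) * (mobius z ξ)⁻¹ ∂σ‖ ≤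
      (1 - c / (1152 * 9 * 36 ^ 2) / 2) * poissonInt σ z := by
  have hδ : ∀ a : ℂ, ‖a‖ = 1 → c / (1152 * 9 * 36 ^ 2) * poissonInt σ z ≤
      ∫ ξ, poissonKernel z ξ * ‖a - (mobius z ξ)⁻¹‖ ^ 2 ∂σ := fun a _ => by
    rw [integral_congr_ae (g := fun ξ => poissonKernel z ξ * ‖conj a - mobius z ξ‖ ^ 2)
      (hσ.mono fun ξ hξ => by simp only [norm_sub_inv_mobius hz hξ a])]
    exact mul_poissonInt_le_integral_poissonKernel_mul_norm_sub_mobius_sq hσ hc hb hz (conj a)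
  refine (norm_integral_ofReal_mul_le (g := fun ξ => (mobius z ξ)⁻¹)
    (integrable_poissonKernel hσ hz) (measurable_mobius z).inv.aestronglyMeasurable
    (hσ.mono fun ξ hξ => by rw [norm_inv, norm_mobius hz hξ, inv_one]) hδ).trans_eq ?_
  unfold poissonInt poissonKernel; ring

end PoissonIntegral

end UnitDisc

open UnitDisc

/-- Key estimate in the proof of (b) ⟹ (a) of Theorem 1: cancellation in the
twisted Poisson integral. -/
theorem statement16 (σ : Measure ℂ) [IsFiniteMeasure σ]
    (hsupp : σ (sphere (0 : ℂ) 1)ᶜ = 0)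
    (c : ℝ) (hc : 0 < c)
    (hb : ∀ ξ : ℂ, ‖ξ‖ = 1 → ∀ t ∈ Ioc (0 : ℝ) 1,
      c * (t * poissonInt σ (((1 : ℝ) - t) * ξ)) ≤ (σ (bdryArc ξ t)).toReal) :
    ∃ D ∈ Ioo (0 : ℝ) 1, ∀ z ∈ ball (0 : ℂ) 1,
      ‖∫ ξ, (((1 - ‖z‖ ^ 2) / ‖ξ - z‖ ^ 2 : ℝ) : ℂ) *
          ((1 - (starRingEnd ℂ) z * ξ) / (ξ - z)) ∂σ‖ ≤ D * poissonInt σ z := by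
  have hσ : ∀ᵐ ξ ∂σ, ‖ξ‖ = 1 := by
    filter_upwards [mem_ae_iff.2 hsupp] with ξ hξ using mem_sphere_zero_iff_norm.1 hξ
  set ε := c / (1152 * 9 * 36 ^ 2)
  have hε : 0 < ε := by positivity
  refine ⟨max (1 - ε / 2) (1 / 2), ⟨by positivity, max_lt (by linarith) (by norm_num)⟩,
    fun z hz => ?_⟩
  have hz : ‖z‖ < 1 := mem_ball_zero_iff.1 hz
  calc _ = ‖∫ ξ, (poissonKernel z ξ : ℂ) * (mobius z ξ)⁻¹ ∂σ‖ := by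
        simp only [mobius, inv_div]; rfl
    _ ≤ (1 - ε / 2) * poissonInt σ z :=
      norm_integral_poissonKernel_mul_inv_mobius_le hσ hc.le hb hz
    _ ≤ _ := by gcongr; exacts [poissonInt_nonneg σ hz, le_max_left _ _]
end
end
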